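/- Every decision (δ₀,δ₁) with 0 < δ₀ < δ₁ < 1 is admissible: no decision δ' ∈ [0,1]² dominates (δ₀,δ₁). -/

import Mathlib

open scoped ENNReal

/-- The Kullback–Leibler loss `L(θ,d) = θ·log(θ/d) + (1−θ)·log((1−θ)/(1−d)) ∈ [0,∞]`,
with the conventions `0 · log(0/c) = 0` and `c · log(c/0) = +∞` for `c > 0`.
(When `θ = 0` or `θ = 1`, the corresponding vanishing term is `0` automatically
since `Real.log 0 = 0` in Lean.) -/
noncomputable def KLoss (θ d : ℝ) : ℝ≥0∞ :=
  if (θ ≠ 0 ∧ d = 0) ∨ (θ ≠ 1 ∧ d = 1) then ⊤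
  else ENNReal.ofReal
    (θ * Real.log (θ / d) + (1 - θ) * Real.log ((1 - θ) / (1 - d)))

/-- The risk function `R_δ(θ) = (1−θ)·L(θ,δ₀) + θ·L(θ,δ₁) ∈ [0,∞]`
of a decision `δ = (δ₀, δ₁)`. -/
noncomputable def risk (δ : ℝ × ℝ) (θ : ℝ) : ℝ≥0∞ :=
  ENNReal.ofReal (1 - θ) * KLoss θ δ.1 + ENNReal.ofReal θ * KLoss θ δ.2

/-- `δ'` dominates `δ`: `R_{δ'} ≤ R_δ` on `[0,1]`, with strict inequality somewhere. -/
def Dominates (δ' δ : ℝ × ℝ) : Prop :=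
  (∀ θ ∈ Set.Icc (0 : ℝ) 1, risk δ' θ ≤ risk δ θ) ∧
  (∃ θ ∈ Set.Icc (0 : ℝ) 1, risk δ' θ < risk δ θ)

/-! Write `δ' = (p, q)`. At `θ = 1` the risk of `δ'` is `L(1, q) = -log q`, so domination
forces `q ≥ δ₁`. At `θ = δ₀` the risk of `(δ₀, δ₁)` is `δ₀ L(δ₀, δ₁)`, while that of `δ'` is
`(1 - δ₀) L(δ₀, p) + δ₀ L(δ₀, q)`. Since `L(δ₀, ·)` vanishes only at `δ₀` and is strictly
increasing on `[δ₀, 1]`, the latter is strictly larger unless `δ' = (δ₀, δ₁)`. -/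

open Real Set

noncomputable def binaryKL (θ d : ℝ) : ℝ :=
  θ * log (θ / d) + (1 - θ) * log ((1 - θ) / (1 - d))

lemma KLoss_of_mem_Ioo {θ d : ℝ} (hd : d ∈ Ioo 0 1) :
    KLoss θ d = ENNReal.ofReal (binaryKL θ d) := by
  rw [KLoss, if_neg]
  · rfl
  · rintro (⟨-, h⟩ | ⟨-, h⟩)
    exacts [hd.1.ne' h, hd.2.ne h]

lemma KLoss_ne_top {θ d : ℝ} (hd : d ∈ Ioo 0 1) : KLoss θ d ≠ ⊤ := by
  simp [KLoss_of_mem_Ioo hd]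

lemma KLoss_self (θ : ℝ) : KLoss θ θ = 0 := by
  rw [KLoss, if_neg (by tauto)]
  rcases eq_or_ne θ 0 with rfl | h0
  · simp
  rcases eq_or_ne θ 1 with rfl | h1
  · simp
  rw [div_self h0, div_self (sub_ne_zero.mpr h1.symm)]
  simp

lemma sub_le_mul_log_div {a b : ℝ} (ha : 0 ≤ a) (hb : 0 < b) : a - b ≤ a * log (a / b) := by
  rcases ha.eq_or_lt with rfl | ha
  · simpa using hb.le
  have := mul_le_mul_of_nonneg_left (one_sub_inv_le_log_of_pos (div_pos ha hb)) ha.le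
  rwa [inv_div, mul_sub, mul_one, mul_div_cancel₀ _ ha.ne'] at this

lemma sub_lt_mul_log_div {a b : ℝ} (ha : 0 < a) (hb : 0 < b) (hab : a ≠ b) :
    a - b < a * log (a / b) := by
  have hlog := log_lt_sub_one_of_pos (div_pos hb ha)
    (by rwa [ne_eq, div_eq_one_iff_eq ha.ne', eq_comm])
  have := mul_lt_mul_of_pos_left hlog ha
  rw [← inv_div a b, log_inv, mul_sub, mul_one, inv_div, mul_div_cancel₀ _ ha.ne'] at this
  linarith

lemma binaryKL_pos {θ d : ℝ} (hθ : θ ∈ Icc 0 1) (hd : d ∈ Ioo 0 1) (h : θ ≠ d) :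
    0 < binaryKL θ d := by
  have h' : 1 - θ ≠ 1 - d := fun h'' => h (by linarith)
  have hd' : 0 < 1 - d := sub_pos.mpr hd.2
  unfold binaryKL
  rcases hθ.1.eq_or_lt with rfl | hθ0
  · linarith [sub_lt_mul_log_div one_pos hd' (by simpa using h'), sub_le_mul_log_div le_rfl hd.1]
  · linarith [sub_lt_mul_log_div hθ0 hd.1 h, sub_le_mul_log_div (sub_nonneg.mpr hθ.2) hd']

lemma KLoss_pos {θ d : ℝ} (hθ : θ ∈ Icc 0 1) (hd : d ∈ Icc 0 1) (h : θ ≠ d) :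
    0 < KLoss θ d := by
  rcases hd.1.eq_or_lt with rfl | hd0
  · simp [KLoss, h]
  rcases hd.2.eq_or_lt with rfl | hd1
  · simp [KLoss, h]
  rw [KLoss_of_mem_Ioo ⟨hd0, hd1⟩, ENNReal.ofReal_pos]
  exact binaryKL_pos hθ ⟨hd0, hd1⟩ h

/-- The difference is affine in `θ`, and equals `binaryKL d e` at `θ = d`. -/
lemma binaryKL_sub_binaryKL {θ d e : ℝ} (hθ : θ ∈ Ioo 0 1) (hd : d ∈ Ioo 0 1)
    (he : e ∈ Ioo 0 1) :
    binaryKL θ e - binaryKL θ d =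
      binaryKL d e + (θ - d) * (log (d / e) - log ((1 - d) / (1 - e))) := by
  have hθ' : 1 - θ ≠ 0 := (sub_pos.mpr hθ.2).ne'
  have hd' : 1 - d ≠ 0 := (sub_pos.mpr hd.2).ne'
  have he' : 1 - e ≠ 0 := (sub_pos.mpr he.2).ne'
  simp only [binaryKL, log_div hθ.1.ne' hd.1.ne', log_div hθ.1.ne' he.1.ne', log_div hθ' hd',
    log_div hθ' he', log_div hd.1.ne' he.1.ne', log_div hd' he']
  ring

lemma binaryKL_lt_binaryKL {θ d e : ℝ} (hθ : 0 < θ) (hθd : θ ≤ d) (hde : d < e) (he : e < 1) :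
    binaryKL θ d < binaryKL θ e := by
  have hd : d ∈ Ioo 0 1 := ⟨hθ.trans_le hθd, hde.trans he⟩
  have he' : e ∈ Ioo 0 1 := ⟨hd.1.trans hde, he⟩
  have hdiff := binaryKL_sub_binaryKL ⟨hθ, hθd.trans_lt hd.2⟩ hd he'
  have hlog : log (d / e) - log ((1 - d) / (1 - e)) < 0 := by
    have h1 : log (d / e) < 0 := log_neg (div_pos hd.1 he'.1) ((div_lt_one he'.1).mpr hde)
    have h2 : 0 < log ((1 - d) / (1 - e)) :=
      log_pos ((one_lt_div (sub_pos.mpr he)).mpr (by linarith))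
    linarith
  have hpos := binaryKL_pos (Ioo_subset_Icc_self hd) he' hde.ne
  nlinarith [mul_nonneg_of_nonpos_of_nonpos (sub_nonpos.mpr hθd) hlog.le]

lemma KLoss_strictMonoOn {θ : ℝ} (hθ : 0 < θ) : StrictMonoOn (KLoss θ) (Icc θ 1) := by
  rintro d ⟨hθd, -⟩ e ⟨-, he⟩ hde
  have hd : d ∈ Ioo 0 1 := ⟨hθ.trans_le hθd, hde.trans_le he⟩
  rcases he.eq_or_lt with rfl | he
  · rw [show KLoss θ 1 = ⊤ by simp [KLoss, (hθd.trans_lt hd.2).ne]]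
    exact (KLoss_ne_top hd).lt_top
  have he' : e ∈ Ioo 0 1 := ⟨hd.1.trans hde, he⟩
  rw [KLoss_of_mem_Ioo hd, KLoss_of_mem_Ioo he',
    ENNReal.ofReal_lt_ofReal_iff (binaryKL_pos ⟨hθ.le, by linarith [hd.2]⟩ he' (by linarith))]
  exact binaryKL_lt_binaryKL hθ hθd hde he

lemma binaryKL_one (d : ℝ) : binaryKL 1 d = -log d := by
  simp [binaryKL]

lemma KLoss_one_strictAntiOn : StrictAntiOn (KLoss 1) (Icc 0 1) := by
  rintro d ⟨hd, -⟩ e ⟨-, he⟩ hde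
  rcases he.eq_or_lt with rfl | he1
  · rw [KLoss_self]
    exact KLoss_pos ⟨zero_le_one, le_rfl⟩ ⟨hd, hde.le⟩ hde.ne'
  have he' : e ∈ Ioo 0 1 := ⟨hd.trans_lt hde, he1⟩
  rcases hd.eq_or_lt with rfl | hd0
  · rw [show KLoss 1 0 = ⊤ by simp [KLoss]]
    exact (KLoss_ne_top he').lt_top
  rw [KLoss_of_mem_Ioo he', KLoss_of_mem_Ioo ⟨hd0, hde.trans he1⟩, binaryKL_one, binaryKL_one,
    ENNReal.ofReal_lt_ofReal_iff (neg_pos.mpr (log_neg hd0 (hde.trans he1)))]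
  exact neg_lt_neg (log_lt_log hd0 hde)

lemma risk_one (δ : ℝ × ℝ) : risk δ 1 = KLoss 1 δ.2 := by
  simp [risk]

lemma risk_fst_self (a b : ℝ) : risk (a, b) a = ENNReal.ofReal a * KLoss a b := by
  simp [risk, KLoss_self]

lemma risk_lt_risk_of_ne {a b p q : ℝ} (ha : 0 < a) (hab : a ≤ b) (hb : b < 1)
    (hp : p ∈ Icc 0 1) (hbq : b ≤ q) (hq : q ≤ 1) (hne : (p, q) ≠ (a, b)) :
    risk (a, b) a < risk (p, q) a := by
  rw [risk_fst_self, risk]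
  rcases eq_or_ne p a with rfl | hpa
  · have hqb : b < q := hbq.lt_of_ne fun h => hne (by rw [h])
    rw [KLoss_self, mul_zero, zero_add]
    exact ENNReal.mul_lt_mul_right (by simpa using ha) ENNReal.ofReal_ne_top
      (KLoss_strictMonoOn ha ⟨hab, hb.le⟩ ⟨hab.trans hbq, hq⟩ hqb)
  · have hKb : KLoss a b ≤ KLoss a q :=
      (KLoss_strictMonoOn ha).monotoneOn ⟨hab, hb.le⟩ ⟨hab.trans hbq, hq⟩ hbq
    have hfin : ENNReal.ofReal a * KLoss a b ≠ ⊤ :=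
      ENNReal.mul_ne_top ENNReal.ofReal_ne_top (KLoss_ne_top ⟨ha.trans_le hab, hb⟩)
    have hpos : 0 < ENNReal.ofReal (1 - a) * KLoss a p :=
      ENNReal.mul_pos (by simpa using hab.trans_lt hb)
        (KLoss_pos ⟨ha.le, hab.trans hb.le⟩ hp hpa.symm).ne'
    calc ENNReal.ofReal a * KLoss a b = 0 + ENNReal.ofReal a * KLoss a b := (zero_add _).symm
      _ < ENNReal.ofReal (1 - a) * KLoss a p + ENNReal.ofReal a * KLoss a q :=
        ENNReal.add_lt_add_of_lt_of_le hfin hpos (by gcongr)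

/-- Every decision `(δ₀, δ₁)` with `0 < δ₀ < δ₁ < 1` is admissible: no decision in
`[0,1]²` dominates it. -/
theorem increasing_interior_admissible (δ₀ δ₁ : ℝ)
    (h1 : 0 < δ₀) (h2 : δ₀ < δ₁) (h3 : δ₁ < 1) :
    ∀ δ' : ℝ × ℝ, δ'.1 ∈ Set.Icc (0 : ℝ) 1 → δ'.2 ∈ Set.Icc (0 : ℝ) 1 →
      ¬ Dominates δ' (δ₀, δ₁) := by
  rintro ⟨p, q⟩ hp ⟨hq0, hq1⟩ ⟨hle, θ, -, hlt⟩
  have hbq : δ₁ ≤ q :=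
    (KLoss_one_strictAntiOn.le_iff_ge ⟨hq0, hq1⟩ ⟨h1.le.trans h2.le, h3.le⟩).mp
      (by simpa only [risk_one] using hle 1 ⟨zero_le_one, le_rfl⟩)
  have hpq : (p, q) = (δ₀, δ₁) := by
    by_contra hne
    exact (hle δ₀ ⟨h1.le, (h2.trans h3).le⟩).not_gt (risk_lt_risk_of_ne h1 h2.le h3 hp hbq hq1 hne)
  exact (hpq ▸ hlt).false
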